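/- Let β_A, β_H > 0, α_A, α_H ≥ 0 with either (α_A = α_H = 0 and β_A ≠ β_H) (class P_NI) or (α_A, α_H > 0, β_A ≠ β_H, α_A ≠ α_H and β_A/β_H = α_A/α_H) (class P_SP,1). Then for every λ ∈ (0,1), every initial size ω₀ ≥ 1 and every horizon n ≥ 1, the Hellinger integral has the exact value H_{λ,n} = exp( a_n^{(q_λ^E)}·ω₀ + (α_A/β_A)·Σ_{k=1}^{n} a_k^{(q_λ^E)} ), where q_λ^E := β_A^λ·β_H^{1−λ}; moreover α_A/β_A may equivalently be replaced by α_H/β_H. -/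

import Mathlib

open Real Filter

/-- One transition weight of the Poisson Galton–Watson process with immigration:
probability that the next generation size is `y` given the previous size is `x`. -/
noncomputable def gwStep (β α : ℝ) (x y : ℕ) : ℝ :=
  Real.exp (-(β * (x : ℝ) + α)) * (β * (x : ℝ) + α) ^ y / (Nat.factorial y : ℝ)

/-- The `n`-step path law (pmf on `Fin n → ℕ`) with initial generation size `ω₀`. -/
noncomputable def gwPath (β α : ℝ) (ω₀ n : ℕ) (ω : Fin n → ℕ) : ℝ :=
  ∏ k : Fin n,
    gwStep β α
      (if (k : ℕ) = 0 then ω₀ else ω ⟨(k : ℕ) - 1, Nat.lt_of_le_of_lt (Nat.sub_le _ _) k.2⟩)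
      (ω k)

/-- Hellinger integral of order `lam` between the `n`-step path laws. -/
noncomputable def hellinger (βA αA βH αH lam : ℝ) (ω₀ n : ℕ) : ℝ :=
  ∑' ω : Fin n → ℕ, gwPath βA αA ω₀ n ω ^ lam * gwPath βH αH ω₀ n ω ^ (1 - lam)

/-- The recursion `a₀ = 0`, `a_{n+1} = q·e^{a_n} − βl`. -/
noncomputable def aSeq (q βl : ℝ) : ℕ → ℝ
  | 0 => 0
  | n + 1 => q * Real.exp (aSeq q βl n) - βl

/-- The recursion `b₀ = 0`, `b_{n+1} = p·e^{a_n} − αl`. -/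
noncomputable def bSeq (p q βl αl : ℝ) : ℕ → ℝ
  | 0 => 0
  | n + 1 => p * Real.exp (aSeq q βl n) - αl

/-! In both parameter classes `α_• = c·β_•` with `c = α_A/β_A`, so the Poisson means are
`β_•·(x + c)`. The `λ`-geometric mean of the Poisson weights with means `β_A t` and `β_H t` is
`e^{(q - β_λ) t}` times the Poisson weight with mean `q t`, where `q = β_A^λ β_H^{1-λ}`, so the
Hellinger integrand is a path product of this kernel. Summing out the generations from the last
one backwards, the Poisson moment generating function `∑_y Pois(μ)(y) e^{a y} = e^{μ (e^a - 1)}`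
turns `e^{a_k y}` into `e^{a_{k+1} (x + c)}`; the immigration offsets `c·a_k` accumulate into
`c·∑_{k ≤ n} a_k`. -/

open Finset

noncomputable def poissonWeight (μ : ℝ) (y : ℕ) : ℝ :=
  exp (-μ) * μ ^ y / (Nat.factorial y : ℝ)

lemma gwStep_eq_poissonWeight (β α : ℝ) (x y : ℕ) :
    gwStep β α x y = poissonWeight (β * x + α) y :=
  rfl

lemma poissonWeight_nonneg {μ : ℝ} (hμ : 0 ≤ μ) (y : ℕ) : 0 ≤ poissonWeight μ y := by
  unfold poissonWeight
  positivity

lemma gwStep_nonneg {β α : ℝ} (hβ : 0 ≤ β) (hα : 0 ≤ α) (x y : ℕ) : 0 ≤ gwStep β α x y :=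
  poissonWeight_nonneg (by positivity) y

lemma hasSum_poissonWeight_mul_exp (μ a : ℝ) :
    HasSum (fun y : ℕ => poissonWeight μ y * exp (a * y)) (exp (μ * (exp a - 1))) := by
  have hterm : (fun y : ℕ => poissonWeight μ y * exp (a * y)) =
      fun y => exp (-μ) * ((μ * exp a) ^ y / (Nat.factorial y : ℝ)) := by
    funext y
    rw [poissonWeight, mul_comm a, exp_nat_mul, mul_pow]
    ring
  have hexp := NormedSpace.expSeries_div_hasSum_exp (μ * exp a)
  rw [← Real.exp_eq_exp_ℝ] at hexp
  rw [hterm, show μ * (exp a - 1) = -μ + μ * exp a by ring, exp_add]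
  exact hexp.mul_left _

lemma rpow_mul_rpow_one_sub {x : ℝ} (hx : 0 ≤ x) (l : ℝ) : x ^ l * x ^ (1 - l) = x := by
  rw [← rpow_add' hx (by norm_num), add_sub_cancel, rpow_one]

lemma poissonWeight_rpow_mul_rpow {μ ν : ℝ} (hμ : 0 ≤ μ) (hν : 0 ≤ ν) (l : ℝ) (y : ℕ) :
    poissonWeight μ y ^ l * poissonWeight ν y ^ (1 - l) =
      exp (μ ^ l * ν ^ (1 - l) - (l * μ + (1 - l) * ν)) *
        poissonWeight (μ ^ l * ν ^ (1 - l)) y := by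
  have hfac : (0 : ℝ) ≤ Nat.factorial y := Nat.cast_nonneg _
  unfold poissonWeight
  rw [div_rpow (by positivity) hfac, div_rpow (by positivity) hfac,
    mul_rpow (exp_pos _).le (by positivity), mul_rpow (exp_pos _).le (by positivity),
    ← exp_mul, ← exp_mul, ← rpow_pow_comm hμ, ← rpow_pow_comm hν]
  calc exp (-μ * l) * (μ ^ l) ^ y / (Nat.factorial y : ℝ) ^ l *
        (exp (-ν * (1 - l)) * (ν ^ (1 - l)) ^ y / (Nat.factorial y : ℝ) ^ (1 - l))
      = exp (-μ * l + -ν * (1 - l)) * (μ ^ l * ν ^ (1 - l)) ^ y /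
          ((Nat.factorial y : ℝ) ^ l * (Nat.factorial y : ℝ) ^ (1 - l)) := by
        rw [exp_add, mul_pow]; ring
    _ = _ := by
        rw [rpow_mul_rpow_one_sub hfac, mul_div_assoc, mul_div_assoc, ← mul_assoc, ← exp_add]
        congr 2
        ring

/-- `ω i` is generation `i + 1`, with parent `Fin.cons x ω i.castSucc` (generation `0` is `x`). -/
noncomputable def pathProd (k : ℕ → ℕ → ℝ) (x : ℕ) {n : ℕ} (ω : Fin n → ℕ) : ℝ :=
  ∏ i : Fin n, k ((Fin.cons x ω : Fin (n + 1) → ℕ) i.castSucc) (ω i)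

lemma gwPath_eq_pathProd (β α : ℝ) (ω₀ n : ℕ) (ω : Fin n → ℕ) :
    gwPath β α ω₀ n ω = pathProd (gwStep β α) ω₀ ω := by
  refine prod_congr rfl fun i _ => ?_
  rcases i with ⟨_ | j, hj⟩
  · rfl
  · rfl

lemma pathProd_cons (k : ℕ → ℕ → ℝ) (x y : ℕ) {n : ℕ} (ρ : Fin n → ℕ) :
    pathProd k x (Fin.cons y ρ : Fin (n + 1) → ℕ) = k x y * pathProd k y ρ := by
  simp [pathProd, Fin.prod_univ_succ]

lemma pathProd_nonneg {k : ℕ → ℕ → ℝ} (hk : ∀ x y, 0 ≤ k x y) (x : ℕ) {n : ℕ}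
    (ω : Fin n → ℕ) : 0 ≤ pathProd k x ω :=
  prod_nonneg fun _ _ => hk _ _

lemma pathProd_rpow_mul_rpow {k₁ k₂ : ℕ → ℕ → ℝ} (h₁ : ∀ x y, 0 ≤ k₁ x y)
    (h₂ : ∀ x y, 0 ≤ k₂ x y) (r s : ℝ) (x : ℕ) {n : ℕ} (ω : Fin n → ℕ) :
    pathProd k₁ x ω ^ r * pathProd k₂ x ω ^ s =
      pathProd (fun x y => k₁ x y ^ r * k₂ x y ^ s) x ω := by
  rw [pathProd, pathProd, pathProd, ← Real.finsetProd_rpow _ _ (fun _ _ => h₁ _ _),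
    ← Real.finsetProd_rpow _ _ (fun _ _ => h₂ _ _), ← prod_mul_distrib]

theorem hasSum_pathProd {k : ℕ → ℕ → ℝ} (hk : ∀ x y, 0 ≤ k x y) {V : ℕ → ℕ → ℝ}
    (hV₀ : ∀ x, V 0 x = 1) (hV : ∀ n x, HasSum (fun y => k x y * V n y) (V (n + 1) x)) :
    ∀ n x, HasSum (fun ω : Fin n → ℕ => pathProd k x ω) (V n x) := by
  intro n
  induction n with
  | zero =>
    intro x
    simp [pathProd, hV₀]
  | succ n ih =>
    intro x
    set f : ℕ × (Fin n → ℕ) → ℝ := fun p => k x p.1 * pathProd k p.1 p.2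
    have hfiber : ∀ y, HasSum (fun ρ => f (y, ρ)) (k x y * V n y) :=
      fun y => (ih y).mul_left (k x y)
    have hf : Summable f := by
      refine (summable_prod_of_nonneg fun p => mul_nonneg (hk _ _) (pathProd_nonneg hk _ _)).2
        ⟨fun y => (hfiber y).summable, ?_⟩
      exact (hV n x).summable.congr fun y => (hfiber y).tsum_eq.symm
    have hsum : HasSum f (V (n + 1) x) := by
      rw [hf.hasSum_iff, hf.tsum_prod' fun y => (hfiber y).summable]
      simpa only [(hfiber _).tsum_eq] using (hV n x).tsum_eq
    rw [← (Fin.consEquiv fun _ => ℕ).hasSum_iff]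
    convert hsum using 1
    ext ⟨y, ρ⟩
    exact pathProd_cons k x y ρ

lemma gwStep_rpow_mul_rpow_of_proportional {βA βH c : ℝ} (hβA : 0 ≤ βA) (hβH : 0 ≤ βH)
    (hc : 0 ≤ c) (lam : ℝ) (x y : ℕ) :
    gwStep βA (c * βA) x y ^ lam * gwStep βH (c * βH) x y ^ (1 - lam) =
      exp ((βA ^ lam * βH ^ (1 - lam) - (lam * βA + (1 - lam) * βH)) * (x + c)) *
        poissonWeight (βA ^ lam * βH ^ (1 - lam) * (x + c)) y := by
  have ht : (0 : ℝ) ≤ x + c := by positivity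
  have hmean : ∀ β : ℝ, β * x + c * β = β * (x + c) := fun β => by ring
  have hgeom : (βA * (x + c)) ^ lam * (βH * (x + c)) ^ (1 - lam) =
      βA ^ lam * βH ^ (1 - lam) * (x + c) := by
    rw [mul_rpow hβA ht, mul_rpow hβH ht, mul_mul_mul_comm, rpow_mul_rpow_one_sub ht]
  rw [gwStep_eq_poissonWeight, gwStep_eq_poissonWeight, hmean, hmean,
    poissonWeight_rpow_mul_rpow (mul_nonneg hβA ht) (mul_nonneg hβH ht), hgeom]
  congr 2
  ring

lemma hasSum_exp_aSeq_step (q b c : ℝ) (n x : ℕ) :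
    HasSum (fun y : ℕ => exp ((q - b) * (x + c)) * poissonWeight (q * (x + c)) y *
        exp (aSeq q b n * y + c * ∑ k ∈ Icc 1 n, aSeq q b k))
      (exp (aSeq q b (n + 1) * x + c * ∑ k ∈ Icc 1 (n + 1), aSeq q b k)) := by
  have h := (hasSum_poissonWeight_mul_exp (q * (x + c)) (aSeq q b n)).mul_left
    (exp ((q - b) * (x + c) + c * ∑ k ∈ Icc 1 n, aSeq q b k))
  have hexponent : aSeq q b (n + 1) * x + c * ∑ k ∈ Icc 1 (n + 1), aSeq q b k =
      (q - b) * (x + c) + c * ∑ k ∈ Icc 1 n, aSeq q b k +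
        q * (x + c) * (exp (aSeq q b n) - 1) := by
    rw [sum_Icc_succ_top (by omega), aSeq]
    ring
  rw [hexponent, exp_add]
  refine h.congr_fun fun y => ?_
  rw [exp_add, exp_add]
  ring

theorem hellinger_of_proportional {βA βH c : ℝ} (hβA : 0 ≤ βA) (hβH : 0 ≤ βH) (hc : 0 ≤ c)
    (lam : ℝ) (ω₀ n : ℕ) :
    hellinger βA (c * βA) βH (c * βH) lam ω₀ n =
      exp (aSeq (βA ^ lam * βH ^ (1 - lam)) (lam * βA + (1 - lam) * βH) n * ω₀ +
        c * ∑ k ∈ Icc 1 n, aSeq (βA ^ lam * βH ^ (1 - lam)) (lam * βA + (1 - lam) * βH) k) := by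
  set q := βA ^ lam * βH ^ (1 - lam)
  set b := lam * βA + (1 - lam) * βH
  have hq : 0 ≤ q := mul_nonneg (rpow_nonneg hβA _) (rpow_nonneg hβH _)
  have hkernel : ∀ x y : ℕ, 0 ≤ exp ((q - b) * (x + c)) * poissonWeight (q * (x + c)) y :=
    fun x y => mul_nonneg (exp_pos _).le (poissonWeight_nonneg (by positivity) y)
  unfold hellinger
  simp_rw [gwPath_eq_pathProd,
    pathProd_rpow_mul_rpow (gwStep_nonneg hβA (mul_nonneg hc hβA))
      (gwStep_nonneg hβH (mul_nonneg hc hβH)),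
    gwStep_rpow_mul_rpow_of_proportional hβA hβH hc]
  exact (hasSum_pathProd hkernel
    (V := fun n x => exp (aSeq q b n * x + c * ∑ k ∈ Icc 1 n, aSeq q b k))
    (fun x => by simp [aSeq]) (hasSum_exp_aSeq_step q b c) n ω₀).tsum_eq

theorem hellinger_exact_value_general (βA βH αA αH : ℝ) (hβA : 0 < βA) (hβH : 0 < βH)
    (hαA : 0 ≤ αA)
    (hclass : (αA = 0 ∧ αH = 0 ∧ βA ≠ βH) ∨
      (0 < αA ∧ 0 < αH ∧ βA ≠ βH ∧ αA ≠ αH ∧ βA / βH = αA / αH))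
    (lam : ℝ)
    (ω₀ : ℕ) (n : ℕ) :
    hellinger βA αA βH αH lam ω₀ n =
      Real.exp (aSeq (βA ^ lam * βH ^ (1 - lam)) (lam * βA + (1 - lam) * βH) n * (ω₀ : ℝ)
        + (αA / βA) *
          ∑ k ∈ Finset.Icc 1 n, aSeq (βA ^ lam * βH ^ (1 - lam)) (lam * βA + (1 - lam) * βH) k) ∧
    hellinger βA αA βH αH lam ω₀ n =
      Real.exp (aSeq (βA ^ lam * βH ^ (1 - lam)) (lam * βA + (1 - lam) * βH) n * (ω₀ : ℝ)
        + (αH / βH) *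
          ∑ k ∈ Finset.Icc 1 n, aSeq (βA ^ lam * βH ^ (1 - lam)) (lam * βA + (1 - lam) * βH) k) := by
  have hratio : αH / βH = αA / βA := by
    rcases hclass with ⟨hA, hH, -⟩ | ⟨-, hH, -, -, h⟩
    · simp [hA, hH]
    · rw [div_eq_div_iff hβH.ne' hH.ne'] at h
      rw [div_eq_div_iff hβH.ne' hβA.ne']
      linarith
  have hA : αA / βA * βA = αA := div_mul_cancel₀ αA hβA.ne'
  have hH : αA / βA * βH = αH := by rw [← hratio, div_mul_cancel₀ αH hβH.ne']
  have key := hellinger_of_proportional hβA.le hβH.le (div_nonneg hαA hβA.le) lam ω₀ n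
  rw [hA, hH] at key
  exact ⟨key, hratio ▸ key⟩

/-- For parameters in `P_NI` (no immigration, `β_A ≠ β_H`) or `P_SP,1`
(strictly positive parameters with `β_A ≠ β_H`, `α_A ≠ α_H`, `β_A/β_H = α_A/α_H`),
the Hellinger integral has the exact recursively computable value
`H_{λ,n} = exp(a_n^{(q_λ^E)}·ω₀ + (α_A/β_A)·Σ_{k=1}^n a_k^{(q_λ^E)})`, where
`q_λ^E = β_A^λ·β_H^{1−λ}`; moreover `α_A/β_A` may be replaced by `α_H/β_H`. -/
theorem hellinger_exact_value (βA βH αA αH : ℝ) (hβA : 0 < βA) (hβH : 0 < βH)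
    (hαA : 0 ≤ αA) (hαH : 0 ≤ αH)
    (hclass : (αA = 0 ∧ αH = 0 ∧ βA ≠ βH) ∨
      (0 < αA ∧ 0 < αH ∧ βA ≠ βH ∧ αA ≠ αH ∧ βA / βH = αA / αH))
    (lam : ℝ) (hlam : lam ∈ Set.Ioo (0 : ℝ) 1)
    (ω₀ : ℕ) (hω₀ : 1 ≤ ω₀) (n : ℕ) (hn : 1 ≤ n) :
    hellinger βA αA βH αH lam ω₀ n =
      Real.exp (aSeq (βA ^ lam * βH ^ (1 - lam)) (lam * βA + (1 - lam) * βH) n * (ω₀ : ℝ)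
        + (αA / βA) *
          ∑ k ∈ Finset.Icc 1 n, aSeq (βA ^ lam * βH ^ (1 - lam)) (lam * βA + (1 - lam) * βH) k) ∧
    hellinger βA αA βH αH lam ω₀ n =
      Real.exp (aSeq (βA ^ lam * βH ^ (1 - lam)) (lam * βA + (1 - lam) * βH) n * (ω₀ : ℝ)
        + (αH / βH) *
          ∑ k ∈ Finset.Icc 1 n, aSeq (βA ^ lam * βH ^ (1 - lam)) (lam * βA + (1 - lam) * βH) k) :=
  hellinger_exact_value_general βA βH αA αH hβA hβH hαA hclass lam ω₀ n
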